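/- Let Ω, λ, u, h, Γ_h^−, Γ_h^+, ν⁻ be as in the context, where now θ₀ = απ with α ∈ (0,2) irrational. Suppose Γ_h^− is a generalized singular line of u with constant parameter C₁ ∈ ℂ, i.e., ∇u(x)·ν⁻ + C₁·u(x) = 0 for all x ∈ Γ_h^−, and Γ_h^+ is a nodal line of u, i.e., u(x) = 0 for all x ∈ Γ_h^+. Then u has infinite vanishing order at 0: every partial derivative of u of every order vanishes at 0. -/

import Mathlib

/-!
With `e₁ = (1, 0)` and `w = (cos θ₀, sin θ₀)`, consider the mixed derivatives
`m i j = ∂_{e₁}^i ∂_w^j u (0)`; analyticity lets directional derivatives commute. The nodal line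
gives `m 0 j = 0`. Since `w = cos θ₀ e₁ - sin θ₀ ν⁻`, the boundary condition on `Γ_h^−` gives
`m i 1 = cos θ₀ m (i+1) 0 + C₁ sin θ₀ m i 0`, and `sin² θ₀` times the Helmholtz equation, written
in the oblique frame `(e₁, w)`, gives
`m (i+2) j + m i (j+2) = 2 cos θ₀ m (i+1) (j+1) - λ sin² θ₀ m i j`.
If all `m i j` with `i + j < N` vanish, these are the Chebyshev recurrence along the antidiagonal
`i + j = N`, so `m (N-j) j = cos (j θ₀) m N 0`; at `j = N` the nodal line and `cos (N α π) ≠ 0`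
force `m N 0 = 0`. So all mixed derivatives vanish; since `e₁, w` span the plane, so do all
directional derivatives, and the Taylor series of `u` at `0` is zero.
-/

noncomputable def pd1 (u : ℝ × ℝ → ℂ) : ℝ × ℝ → ℂ := fun x => fderiv ℝ u x (1, 0)

noncomputable def pd2 (u : ℝ × ℝ → ℂ) : ℝ × ℝ → ℂ := fun x => fderiv ℝ u x (0, 1)

open Filter Set Topology

section DirDeriv

variable {E F : Type*} [NormedAddCommGroup E] [NormedSpace ℝ E]
  [NormedAddCommGroup F] [NormedSpace ℝ F] {f g : E → F} {x : E} {v w : E}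

noncomputable def dirDeriv (v : E) (f : E → F) : E → F := fun x => fderiv ℝ f x v

noncomputable def mixedDeriv (v w : E) (i j : ℕ) (f : E → F) : E → F :=
  (dirDeriv v)^[i] ((dirDeriv w)^[j] f)

theorem dirDeriv_add_left (v w : E) (f : E → F) :
    dirDeriv (v + w) f = dirDeriv v f + dirDeriv w f :=
  funext fun x => map_add (fderiv ℝ f x) v w

theorem dirDeriv_smul_left (a : ℝ) (v : E) (f : E → F) :
    dirDeriv (a • v) f = a • dirDeriv v f :=
  funext fun x => map_smul (fderiv ℝ f x) a v

theorem dirDeriv_apply_add (hf : DifferentiableAt ℝ f x) (hg : DifferentiableAt ℝ g x) :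
    dirDeriv v (f + g) x = dirDeriv v f x + dirDeriv v g x := by
  simp [dirDeriv, fderiv_add hf hg]

theorem dirDeriv_dirDeriv_apply (hf : DifferentiableAt ℝ (fderiv ℝ f) x) :
    dirDeriv v (dirDeriv w f) x = fderiv ℝ (fderiv ℝ f) x v w := by
  change fderiv ℝ (fun y => fderiv ℝ f y w) x v = _
  simp [fderiv_clm_apply hf (differentiableAt_const w)]

section ConstSMul

variable {R : Type*} [DivisionSemiring R] [Module R F] [SMulCommClass ℝ R F]
  [ContinuousConstSMul R F]

theorem dirDeriv_const_smul (c : R) (f : E → F) : dirDeriv v (c • f) = c • dirDeriv v f := by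
  ext x; simp [dirDeriv, fderiv_const_smul_field]

theorem iterate_dirDeriv_const_smul (c : R) (f : E → F) (n : ℕ) :
    (dirDeriv v)^[n] (c • f) = c • (dirDeriv v)^[n] f := by
  induction n generalizing f with
  | zero => rfl
  | succ n ih => simp only [Function.iterate_succ_apply, dirDeriv_const_smul, ih]

theorem mixedDeriv_const_smul (c : R) (f : E → F) (i j : ℕ) :
    mixedDeriv v w i j (c • f) = c • mixedDeriv v w i j f := by
  simp only [mixedDeriv, iterate_dirDeriv_const_smul]

theorem mixedDeriv_zero (v w : E) (i j : ℕ) : mixedDeriv v w i j (0 : E → F) = 0 := by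
  simpa using mixedDeriv_const_smul (v := v) (w := w) (0 : ℝ) (0 : E → F) i j

end ConstSMul

protected theorem Filter.EventuallyEq.dirDeriv (h : f =ᶠ[𝓝 x] g) (v : E) :
    dirDeriv v f =ᶠ[𝓝 x] dirDeriv v g :=
  (h.fderiv (𝕜 := ℝ)).mono fun y hy => by simp only [dirDeriv, hy]

theorem Filter.EventuallyEq.iterate_dirDeriv (h : f =ᶠ[𝓝 x] g) (v : E) (n : ℕ) :
    (dirDeriv v)^[n] f =ᶠ[𝓝 x] (dirDeriv v)^[n] g := by
  induction n generalizing f g with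
  | zero => exact h
  | succ n ih => exact ih (h.dirDeriv v)

protected theorem Filter.EventuallyEq.mixedDeriv (h : f =ᶠ[𝓝 x] g) (v w : E) (i j : ℕ) :
    mixedDeriv v w i j f =ᶠ[𝓝 x] mixedDeriv v w i j g :=
  (h.iterate_dirDeriv w j).iterate_dirDeriv v i

theorem mixedDeriv_dirDeriv_right (v w : E) (f : E → F) (i j : ℕ) :
    mixedDeriv v w i j (dirDeriv w f) = mixedDeriv v w i (j + 1) f := rfl

theorem dirDeriv_mixedDeriv_left (v w : E) (f : E → F) (i j : ℕ) :
    dirDeriv v (mixedDeriv v w i j f) = mixedDeriv v w (i + 1) j f :=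
  (Function.iterate_succ_apply' _ _ _).symm

variable [CompleteSpace F]

protected theorem AnalyticAt.dirDeriv (hf : AnalyticAt ℝ f x) (v : E) :
    AnalyticAt ℝ (dirDeriv v f) x :=
  ((ContinuousLinearMap.apply ℝ F v).analyticAt _).comp hf.fderiv

theorem AnalyticAt.iterate_dirDeriv (hf : AnalyticAt ℝ f x) (v : E) (n : ℕ) :
    AnalyticAt ℝ ((dirDeriv v)^[n] f) x := by
  induction n generalizing f with
  | zero => exact hf
  | succ n ih => exact ih (hf.dirDeriv v)

protected theorem AnalyticAt.mixedDeriv (hf : AnalyticAt ℝ f x) (v w : E) (i j : ℕ) :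
    AnalyticAt ℝ (mixedDeriv v w i j f) x :=
  (hf.iterate_dirDeriv w j).iterate_dirDeriv v i

theorem AnalyticAt.dirDeriv_add (hf : AnalyticAt ℝ f x) (hg : AnalyticAt ℝ g x) (v : E) :
    dirDeriv v (f + g) =ᶠ[𝓝 x] dirDeriv v f + dirDeriv v g := by
  filter_upwards [hf.eventually_analyticAt, hg.eventually_analyticAt] with y hfy hgy
  exact dirDeriv_apply_add hfy.differentiableAt hgy.differentiableAt

theorem AnalyticAt.iterate_dirDeriv_add (hf : AnalyticAt ℝ f x) (hg : AnalyticAt ℝ g x)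
    (v : E) (n : ℕ) :
    (dirDeriv v)^[n] (f + g) =ᶠ[𝓝 x] (dirDeriv v)^[n] f + (dirDeriv v)^[n] g := by
  induction n generalizing f g with
  | zero => rfl
  | succ n ih =>
    exact ((hf.dirDeriv_add hg v).iterate_dirDeriv v n).trans (ih (hf.dirDeriv v) (hg.dirDeriv v))

theorem AnalyticAt.mixedDeriv_add (hf : AnalyticAt ℝ f x) (hg : AnalyticAt ℝ g x)
    (v w : E) (i j : ℕ) :
    mixedDeriv v w i j (f + g) =ᶠ[𝓝 x] mixedDeriv v w i j f + mixedDeriv v w i j g :=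
  ((hf.iterate_dirDeriv_add hg w j).iterate_dirDeriv v i).trans
    ((hf.iterate_dirDeriv w j).iterate_dirDeriv_add (hg.iterate_dirDeriv w j) v i)

theorem AnalyticAt.mixedDeriv_sub (hf : AnalyticAt ℝ f x) (hg : AnalyticAt ℝ g x)
    (v w : E) (i j : ℕ) :
    mixedDeriv v w i j (f - g) =ᶠ[𝓝 x] mixedDeriv v w i j f - mixedDeriv v w i j g := by
  have h := hf.mixedDeriv_add (hg.const_smul (c := (-1 : ℝ))) v w i j
  rwa [mixedDeriv_const_smul, neg_one_smul, neg_one_smul, ← sub_eq_add_neg,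
    ← sub_eq_add_neg] at h

theorem AnalyticAt.dirDeriv_comm (hf : AnalyticAt ℝ f x) (v w : E) :
    dirDeriv v (dirDeriv w f) =ᶠ[𝓝 x] dirDeriv w (dirDeriv v f) := by
  filter_upwards [hf.eventually_analyticAt] with y hy
  have hD := hy.fderiv.differentiableAt
  rw [dirDeriv_dirDeriv_apply hD, dirDeriv_dirDeriv_apply hD,
    hy.contDiffAt.isSymmSndFDerivAt_of_omega v w]

theorem AnalyticAt.iterate_dirDeriv_comm (hf : AnalyticAt ℝ f x) (v w : E) (n : ℕ) :
    (dirDeriv v)^[n] (dirDeriv w f) =ᶠ[𝓝 x] dirDeriv w ((dirDeriv v)^[n] f) := by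
  induction n generalizing f with
  | zero => rfl
  | succ n ih =>
    exact ((hf.dirDeriv_comm v w).iterate_dirDeriv v n).trans (ih (hf.dirDeriv v))

theorem AnalyticAt.mixedDeriv_dirDeriv_left (hf : AnalyticAt ℝ f x) (v w : E) (i j : ℕ) :
    mixedDeriv v w i j (dirDeriv v f) =ᶠ[𝓝 x] mixedDeriv v w (i + 1) j f :=
  (hf.iterate_dirDeriv_comm w v j).iterate_dirDeriv v i

theorem AnalyticAt.dirDeriv_mixedDeriv_right (hf : AnalyticAt ℝ f x) (v w : E) (i j : ℕ) :
    dirDeriv w (mixedDeriv v w i j f) =ᶠ[𝓝 x] mixedDeriv v w i (j + 1) f :=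
  ((hf.iterate_dirDeriv w j).iterate_dirDeriv_comm v w i).symm.trans
    (by rw [mixedDeriv, ← Function.iterate_succ_apply' (dirDeriv w)])

theorem AnalyticAt.iteratedDeriv_comp_add_smul (hf : AnalyticAt ℝ f x) (y : E) (n : ℕ) :
    iteratedDeriv n (fun t : ℝ => f (x + t • y)) 0 = (dirDeriv y)^[n] f x := by
  induction n generalizing f with
  | zero => simp
  | succ n ih =>
    have hline : Tendsto (fun t : ℝ => x + t • y) (𝓝 0) (𝓝 x) :=
      Continuous.tendsto' (by fun_prop) 0 x (by simp)
    have hderiv : deriv (fun t : ℝ => f (x + t • y)) =ᶠ[𝓝 0]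
        fun t => dirDeriv y f (x + t • y) := by
      filter_upwards [hline.eventually hf.eventually_analyticAt] with t ht
      have := ht.differentiableAt.hasFDerivAt.comp_hasDerivAt t
        (((hasDerivAt_id t).smul_const y).const_add x)
      rw [one_smul] at this
      exact this.deriv
    rw [iteratedDeriv_succ', hderiv.iteratedDeriv_eq, ih (hf.dirDeriv y),
      Function.iterate_succ_apply]

theorem AnalyticAt.iterate_dirDeriv_eq_zero_of_eqOn_segment (hf : AnalyticAt ℝ f x) {h : ℝ}
    (hh : 0 < h) (hzero : ∀ t ∈ Icc 0 h, f (x + t • y) = 0) (n : ℕ) :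
    (dirDeriv y)^[n] f x = 0 := by
  have hline : AnalyticAt ℝ (fun t : ℝ => f (x + t • y)) 0 :=
    hf.comp_of_eq (by fun_prop) (by simp)
  have hpos : ∀ᶠ t in 𝓝[>] (0 : ℝ), f (x + t • y) = 0 := by
    filter_upwards [Ioo_mem_nhdsGT hh] with t ht using hzero t (Ioo_subset_Icc_self ht)
  have hline_zero : (fun t : ℝ => f (x + t • y)) =ᶠ[𝓝 0] 0 :=
    hline.frequently_zero_iff_eventually_zero.1
      (hpos.frequently.filter_mono (nhdsWithin_mono _ fun t (ht : 0 < t) => ht.ne'))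
  rw [← hf.iteratedDeriv_comp_add_smul, hline_zero.iteratedDeriv_eq]
  simp

theorem AnalyticAt.iteratedFDeriv_apply_const (hf : AnalyticAt ℝ f x) (n : ℕ) (y : E) :
    iteratedFDeriv ℝ n f x (fun _ => y) = (dirDeriv y)^[n] f x := by
  induction n generalizing f with
  | zero => simp
  | succ n ih =>
    rw [iteratedFDeriv_succ_apply_right, Function.iterate_succ_apply, ← ih (hf.dirDeriv y)]
    have := (ContinuousLinearMap.apply ℝ F y).iteratedFDeriv_comp_left hf.fderiv.contDiffAt
      (i := n) le_top
    exact (congrArg (fun L => L (fun _ => y)) this).symm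

theorem AnalyticAt.eventuallyEq_zero_of_iterate_dirDeriv_eq_zero (hf : AnalyticAt ℝ f x)
    (h : ∀ n y, (dirDeriv y)^[n] f x = 0) : f =ᶠ[𝓝 x] 0 := by
  obtain ⟨p, r, hp⟩ := id hf
  have hball : ∀ᶠ z in 𝓝 x, z - x ∈ Metric.eball (0 : E) r :=
    ((continuous_sub_right x).tendsto' x 0 (sub_self x)).eventually
      (Metric.eball_mem_nhds 0 hp.r_pos)
  filter_upwards [hball] with z hz
  have hsum := hp.hasSum_iteratedFDeriv hz
  simp only [hf.iteratedFDeriv_apply_const, h, smul_zero, add_sub_cancel] at hsum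
  exact hsum.unique hasSum_zero

theorem AnalyticAt.iterate_dirDeriv_eq_zero_of_mixedDeriv_eq_zero (hf : AnalyticAt ℝ f x)
    (hspan : ∀ y, ∃ a b : ℝ, y = a • v + b • w) (h : ∀ i j, mixedDeriv v w i j f x = 0)
    (n : ℕ) (y : E) : (dirDeriv y)^[n] f x = 0 := by
  obtain ⟨a, b, rfl⟩ := hspan y
  suffices h' : ∀ i j, (dirDeriv (a • v + b • w))^[n] (mixedDeriv v w i j f) x = 0 from h' 0 0
  induction n with
  | zero => exact h
  | succ n ih =>
    intro i j
    have hsplit : dirDeriv (a • v + b • w) (mixedDeriv v w i j f) =ᶠ[𝓝 x]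
        a • mixedDeriv v w (i + 1) j f + b • mixedDeriv v w i (j + 1) f := by
      rw [dirDeriv_add_left, dirDeriv_smul_left, dirDeriv_smul_left, dirDeriv_mixedDeriv_left]
      exact EventuallyEq.rfl.add ((hf.dirDeriv_mixedDeriv_right v w i j).const_smul b)
    rw [Function.iterate_succ_apply, (hsplit.iterate_dirDeriv _ n).eq_of_nhds,
      ((((hf.mixedDeriv v w _ _).const_smul (c := a)).iterate_dirDeriv_add
        ((hf.mixedDeriv v w _ _).const_smul (c := b)) _ n)).eq_of_nhds]
    simp [iterate_dirDeriv_const_smul, ih]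

end DirDeriv

section Recurrence

variable {m : ℕ → ℕ → ℂ} {θ : ℝ} {C κ : ℂ}

theorem eq_cos_mul_of_recurrence {N : ℕ}
    (hrobin : ∀ i, m i 1 = Real.cos θ * m (i + 1) 0 + C * m i 0)
    (hpde : ∀ i j, m (i + 2) j + m i (j + 2) = 2 * Real.cos θ * m (i + 1) (j + 1) - κ * m i j)
    (hlow : ∀ i j, i + j < N → m i j = 0) :
    ∀ j i, i + j = N → m i j = Real.cos (j * θ) * m N 0
  | 0, i, hi => by simp [← hi]
  | 1, i, hi => by
    rw [hrobin, hlow i 0 (by omega), show i + 1 = N by omega]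
    simp
  | j + 2, i, hi => by
    have h1 := eq_cos_mul_of_recurrence hrobin hpde hlow (j + 1) (i + 1) (by omega)
    have h0 := eq_cos_mul_of_recurrence hrobin hpde hlow j (i + 2) (by omega)
    have hcos : (Real.cos ((j + 2 : ℕ) * θ) : ℂ) =
        2 * Real.cos θ * Real.cos ((j + 1 : ℕ) * θ) - Real.cos (j * θ) := by
      norm_cast
      push_cast
      rw [show ((j : ℝ) + 2) * θ = (j + 1) * θ + θ by ring,
        show (j : ℝ) * θ = (j + 1) * θ - θ by ring, Real.cos_add, Real.cos_sub]
      ring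
    linear_combination hpde i j - h0 + 2 * Real.cos θ * h1 - κ * hlow i j (by omega)
      - m N 0 * hcos

theorem eq_zero_of_recurrence (hcos : ∀ N : ℕ, N ≠ 0 → Real.cos (N * θ) ≠ 0)
    (hnodal : ∀ j, m 0 j = 0)
    (hrobin : ∀ i, m i 1 = Real.cos θ * m (i + 1) 0 + C * m i 0)
    (hpde : ∀ i j, m (i + 2) j + m i (j + 2) = 2 * Real.cos θ * m (i + 1) (j + 1) - κ * m i j) :
    ∀ i j, m i j = 0 := by
  suffices ∀ N i j, i + j = N → m i j = 0 from fun i j => this _ i j rfl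
  intro N
  induction N using Nat.strong_induction_on with
  | _ N ih =>
  have hcosN := eq_cos_mul_of_recurrence hrobin hpde fun i j h => ih _ h i j rfl
  have hmN : m N 0 = 0 := by
    rcases eq_or_ne N 0 with rfl | hN
    · exact hnodal 0
    · have h := hcosN N 0 (zero_add N)
      rw [hnodal] at h
      exact (mul_eq_zero.1 h.symm).resolve_left (by exact_mod_cast hcos N hN)
  intro i j hij
  rw [hcosN j i hij, hmN, mul_zero]

end Recurrence

theorem Irrational.sin_mul_pi_ne_zero {α : ℝ} (h : Irrational α) :
    Real.sin (α * Real.pi) ≠ 0 := by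
  rw [Ne, Real.sin_eq_zero_iff]
  rintro ⟨n, hn⟩
  exact h.ne_int n (mul_right_cancel₀ Real.pi_ne_zero hn).symm

theorem Irrational.cos_nat_mul_mul_pi_ne_zero {α : ℝ} (h : Irrational α) {N : ℕ}
    (hN : N ≠ 0) :
    Real.cos (N * (α * Real.pi)) ≠ 0 := by
  rw [Ne, Real.cos_eq_zero_iff]
  rintro ⟨k, hk⟩
  apply (h.natCast_mul hN).ne_rational (2 * k + 1) 2
  apply mul_right_cancel₀ Real.pi_ne_zero
  push_cast
  linear_combination hk

theorem exists_eq_smul_add_smul_cos_sin {θ : ℝ} (hs : Real.sin θ ≠ 0) (y : ℝ × ℝ) :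
    ∃ a b : ℝ, y = a • ((1 : ℝ), (0 : ℝ)) + b • (Real.cos θ, Real.sin θ) :=
  ⟨y.1 - Real.cos θ / Real.sin θ * y.2, y.2 / Real.sin θ, by
    ext <;> simp [field]⟩

theorem sin_sq_smul_laplacian_eq {F : Type*} [NormedAddCommGroup F] [NormedSpace ℝ F]
    (B : ℝ × ℝ →L[ℝ] ℝ × ℝ →L[ℝ] F) (hB : ∀ a b, B a b = B b a) (θ : ℝ) :
    Real.sin θ ^ 2 • (B (1, 0) (1, 0) + B (0, 1) (0, 1)) =
      B (1, 0) (1, 0) + B (Real.cos θ, Real.sin θ) (Real.cos θ, Real.sin θ)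
        - (2 * Real.cos θ) • B (1, 0) (Real.cos θ, Real.sin θ) := by
  have hw : (Real.cos θ, Real.sin θ) =
      Real.cos θ • ((1 : ℝ), (0 : ℝ)) + Real.sin θ • ((0 : ℝ), (1 : ℝ)) := by
    ext <;> simp
  rw [hw]
  simp only [map_add, map_smul, add_apply, smul_apply]
  rw [hB (0, 1) (1, 0)]
  linear_combination (norm := module) Real.sin_sq_add_cos_sq θ • B (1, 0) (1, 0)

section Plane

variable {u : ℝ × ℝ → ℂ} {θ : ℝ}

theorem mixedDeriv_robin_relation {h : ℝ} {C : ℂ} (hu : AnalyticAt ℝ u 0) (hh : 0 < h)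
    (hbc : ∀ t ∈ Icc 0 h, dirDeriv (0, -1) u (t, 0) + C * u (t, 0) = 0) (i : ℕ) :
    mixedDeriv (1, 0) (Real.cos θ, Real.sin θ) i 1 u 0 =
      Real.cos θ * mixedDeriv (1, 0) (Real.cos θ, Real.sin θ) (i + 1) 0 u 0
        + Real.sin θ * C * mixedDeriv (1, 0) (Real.cos θ, Real.sin θ) i 0 u 0 := by
  set e₁ : ℝ × ℝ := (1, 0)
  set w : ℝ × ℝ := (Real.cos θ, Real.sin θ)
  have hw : w = Real.cos θ • e₁ + (-Real.sin θ) • ((0 : ℝ), (-1 : ℝ)) := by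
    ext <;> simp [w, e₁]
  set g := dirDeriv w u - Real.cos θ • dirDeriv e₁ u - (Real.sin θ * C) • u
  have hu₁ := hu.dirDeriv e₁
  have hu_w := hu.dirDeriv w
  have hg : AnalyticAt ℝ g 0 := (hu_w.sub hu₁.const_smul).sub hu.const_smul
  have hg_segment : ∀ t ∈ Icc 0 h, g (0 + t • e₁) = 0 := by
    intro t ht
    have hpt : (0 : ℝ × ℝ) + t • e₁ = (t, 0) := by ext <;> simp [e₁]
    simp only [g, hpt, hw, dirDeriv_add_left, dirDeriv_smul_left, Pi.sub_apply, Pi.add_apply,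
      Pi.smul_apply, Complex.real_smul, smul_eq_mul, Complex.ofReal_neg]
    linear_combination (-(Real.sin θ : ℂ)) * hbc t ht
  have hg_zero : mixedDeriv e₁ w i 0 g 0 = 0 :=
    hg.iterate_dirDeriv_eq_zero_of_eqOn_segment hh hg_segment i
  rw [((hu_w.sub hu₁.const_smul).mixedDeriv_sub hu.const_smul e₁ w i 0).eq_of_nhds,
    Pi.sub_apply, (hu_w.mixedDeriv_sub hu₁.const_smul e₁ w i 0).eq_of_nhds, Pi.sub_apply,
    mixedDeriv_const_smul, mixedDeriv_const_smul, Pi.smul_apply, Pi.smul_apply,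
    mixedDeriv_dirDeriv_right, (hu.mixedDeriv_dirDeriv_left e₁ w i 0).eq_of_nhds,
    Complex.real_smul, smul_eq_mul] at hg_zero
  linear_combination hg_zero

theorem mixedDeriv_helmholtz_relation {x : ℝ × ℝ} {lam : ℂ} (hu : AnalyticAt ℝ u x)
    (hpde : ∀ᶠ y in 𝓝 x, pd1 (pd1 u) y + pd2 (pd2 u) y + lam * u y = 0) (i j : ℕ) :
    mixedDeriv (1, 0) (Real.cos θ, Real.sin θ) (i + 2) j u x
        + mixedDeriv (1, 0) (Real.cos θ, Real.sin θ) i (j + 2) u x =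
      2 * Real.cos θ * mixedDeriv (1, 0) (Real.cos θ, Real.sin θ) (i + 1) (j + 1) u x
        - lam * Real.sin θ ^ 2 * mixedDeriv (1, 0) (Real.cos θ, Real.sin θ) i j u x := by
  set e₁ : ℝ × ℝ := (1, 0)
  set w : ℝ × ℝ := (Real.cos θ, Real.sin θ)
  set P := dirDeriv e₁ (dirDeriv e₁ u) + dirDeriv w (dirDeriv w u)
    - (2 * Real.cos θ) • dirDeriv e₁ (dirDeriv w u) + (lam * Real.sin θ ^ 2) • u
  have hP : P =ᶠ[𝓝 x] 0 := by
    filter_upwards [hpde, hu.eventually_analyticAt] with y hy huy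
    have hD := huy.fderiv.differentiableAt
    have hlap := sin_sq_smul_laplacian_eq (fderiv ℝ (fderiv ℝ u) y)
      (huy.contDiffAt.isSymmSndFDerivAt_of_omega) θ
    change dirDeriv e₁ (dirDeriv e₁ u) y + dirDeriv (0, 1) (dirDeriv (0, 1) u) y
      + lam * u y = 0 at hy
    simp only [P, Pi.add_apply, Pi.sub_apply, Pi.smul_apply, Pi.zero_apply]
    simp only [dirDeriv_dirDeriv_apply hD] at hy ⊢
    rw [← hlap]
    simp only [Complex.real_smul, smul_eq_mul, Complex.ofReal_pow]
    linear_combination (Real.sin θ : ℂ) ^ 2 * hy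
  have hu₁ := hu.dirDeriv e₁
  have hu_w := hu.dirDeriv w
  have hu₁₁ := hu₁.dirDeriv e₁
  have hu_ww := hu_w.dirDeriv w
  have hu₁w := hu_w.dirDeriv e₁
  have h₁₁ : mixedDeriv e₁ w i j (dirDeriv e₁ (dirDeriv e₁ u)) x =
      mixedDeriv e₁ w (i + 2) j u x :=
    ((hu₁.mixedDeriv_dirDeriv_left e₁ w i j).trans
      (hu.mixedDeriv_dirDeriv_left e₁ w (i + 1) j)).eq_of_nhds
  have h₁w : mixedDeriv e₁ w i j (dirDeriv e₁ (dirDeriv w u)) x =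
      mixedDeriv e₁ w (i + 1) (j + 1) u x :=
    (hu_w.mixedDeriv_dirDeriv_left e₁ w i j).eq_of_nhds
  have hu₁₁_ww := hu₁₁.add hu_ww
  have h := (hP.mixedDeriv e₁ w i j).eq_of_nhds
  rw [((hu₁₁_ww.sub hu₁w.const_smul).mixedDeriv_add hu.const_smul e₁ w i j).eq_of_nhds,
    Pi.add_apply, (hu₁₁_ww.mixedDeriv_sub hu₁w.const_smul e₁ w i j).eq_of_nhds,
    Pi.sub_apply, (hu₁₁.mixedDeriv_add hu_ww e₁ w i j).eq_of_nhds, Pi.add_apply,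
    mixedDeriv_const_smul, mixedDeriv_const_smul, Pi.smul_apply, Pi.smul_apply, h₁₁, h₁w,
    mixedDeriv_dirDeriv_right, mixedDeriv_dirDeriv_right, mixedDeriv_zero, Pi.zero_apply,
    Complex.real_smul, smul_eq_mul, Complex.ofReal_mul, Complex.ofReal_ofNat] at h
  linear_combination h

end Plane

theorem stmt10_general
    (Ω : Set (ℝ × ℝ))
    (lam : ℝ)
    (u : ℝ × ℝ → ℂ)
    (hu_an : AnalyticOnNhd ℝ u Ω)
    (hu_eq : ∀ x ∈ Ω, pd1 (pd1 u) x + pd2 (pd2 u) x + (lam : ℂ) * u x = 0)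
    (α : ℝ) (hirr : Irrational α)
    (θ₀ : ℝ) (hθ₀ : θ₀ = α * Real.pi)
    (h : ℝ) (hh : 0 < h)
    (hdisk : ∀ x : ℝ × ℝ, x.1 ^ 2 + x.2 ^ 2 ≤ h ^ 2 → x ∈ Ω)
    (C₁ : ℂ)
    (hbc₁ : ∀ r : ℝ, 0 ≤ r → r ≤ h →
      fderiv ℝ u (r, 0) (0, -1) + C₁ * u (r, 0) = 0)
    (hnodal_p : ∀ r : ℝ, 0 ≤ r → r ≤ h → u (r * Real.cos θ₀, r * Real.sin θ₀) = 0) :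
    ∀ k : ℕ, iteratedFDeriv ℝ k u (0, 0) = 0 := by
  have hΩ : Ω ∈ 𝓝 (0 : ℝ × ℝ) := by
    refine mem_of_superset ((isOpen_lt (f := fun x : ℝ × ℝ => x.1 ^ 2 + x.2 ^ 2)
      (by fun_prop) continuous_const).mem_nhds ?_)
      fun x hx => hdisk x hx.le
    simpa using pow_pos hh 2
  have hu : AnalyticAt ℝ u 0 := hu_an 0 (mem_of_mem_nhds hΩ)
  subst hθ₀
  have hm : ∀ i j,
      mixedDeriv (1, 0) (Real.cos (α * Real.pi), Real.sin (α * Real.pi)) i j u 0 = 0 :=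
    eq_zero_of_recurrence (fun N hN => hirr.cos_nat_mul_mul_pi_ne_zero hN)
      (fun j => hu.iterate_dirDeriv_eq_zero_of_eqOn_segment hh
        (fun t ht => by simpa using hnodal_p t ht.1 ht.2) j)
      (mixedDeriv_robin_relation hu hh fun t ht => hbc₁ t ht.1 ht.2)
      (mixedDeriv_helmholtz_relation hu (eventually_of_mem hΩ hu_eq))
  have hzero : u =ᶠ[𝓝 0] 0 := hu.eventuallyEq_zero_of_iterate_dirDeriv_eq_zero
    (hu.iterate_dirDeriv_eq_zero_of_mixedDeriv_eq_zero
      (exists_eq_smul_add_smul_cos_sin hirr.sin_mul_pi_ne_zero) hm)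
  intro k
  rw [Prod.mk_zero_zero]
  simpa using (hzero.iteratedFDeriv ℝ k).eq_of_nhds

/-- A generalized singular line `Γ_h^−` (constant parameter `C₁`) and a nodal line `Γ_h^+`
intersecting at the origin at an irrational angle `θ₀ = απ`, `α ∈ (0,2)` irrational:
`u` has infinite vanishing order at `0`. -/
theorem stmt10
    (Ω : Set (ℝ × ℝ)) (hΩ : IsOpen Ω)
    (lam : ℝ) (hlam : 0 < lam)
    (u : ℝ × ℝ → ℂ)
    (hu_an : AnalyticOnNhd ℝ u Ω)
    (hu_eq : ∀ x ∈ Ω, pd1 (pd1 u) x + pd2 (pd2 u) x + (lam : ℂ) * u x = 0)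
    (α : ℝ) (hα : α ∈ Set.Ioo (0 : ℝ) 2) (hirr : Irrational α)
    (θ₀ : ℝ) (hθ₀ : θ₀ = α * Real.pi)
    (h : ℝ) (hh : 0 < h)
    (hdisk : ∀ x : ℝ × ℝ, x.1 ^ 2 + x.2 ^ 2 ≤ h ^ 2 → x ∈ Ω)
    (C₁ : ℂ)
    (hbc₁ : ∀ r : ℝ, 0 ≤ r → r ≤ h →
      fderiv ℝ u (r, 0) (0, -1) + C₁ * u (r, 0) = 0)
    (hnodal_p : ∀ r : ℝ, 0 ≤ r → r ≤ h → u (r * Real.cos θ₀, r * Real.sin θ₀) = 0) :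
    ∀ k : ℕ, iteratedFDeriv ℝ k u (0, 0) = 0 :=
  stmt10_general Ω lam u hu_an hu_eq α hirr θ₀ hθ₀ h hh hdisk C₁ hbc₁ hnodal_p
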